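/- Let P = (V_1,…,V_n) be a profile of strict weak orders on a candidate set C of size m, and for each i let X_i be the m × m 0/1 matrix with rows and columns indexed by C defined by X_i(a,b) = 0 if a ≻_i b and X_i(a,b) = 1 otherwise (i.e., if b ≻_i a or a ∼_i b). Let X be the row-wise concatenation of X_1,…,X_n. Then P is possibly single-peaked consistent (possibly single-peaked with respect to some axis) if and only if X has the consecutive ones property (there is a permutation of the columns such that in every row the 1-entries are consecutive). -/

import Mathlib

def VValley {C : Type*} (A V : C → C → Prop) : Prop :=
  ∃ c1 c2 c3 : C, A c1 c2 ∧ A c2 c3 ∧ V c1 c2 ∧ V c3 c2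

def UValley {C : Type*} (A V : C → C → Prop) : Prop :=
  ∃ a b c d : C, a ≠ b ∧ a ≠ c ∧ a ≠ d ∧ b ≠ c ∧ b ≠ d ∧ c ≠ d ∧
    A a b ∧ A b d ∧ A a c ∧ A c d ∧ V a b ∧ V d c

def Extends {C : Type*} (V T : C → C → Prop) : Prop :=
  ∀ x y, V x y → T x y

/-- `V` is a strict partial order: asymmetric and transitive. -/
def IsSPO {C : Type*} (V : C → C → Prop) : Prop :=
  (∀ x y, V x y → ¬ V y x) ∧ (∀ x y z, V x y → V y z → V x z)

/-- `V` is a strict weak order: a strict partial order with transitive incomparability. -/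
def IsSWO {C : Type*} (V : C → C → Prop) : Prop :=
  IsSPO V ∧ ∀ x y z, (¬ V x y ∧ ¬ V y x) → (¬ V y z ∧ ¬ V z y) → (¬ V x z ∧ ¬ V z x)

/-- `V` possibly single-peaked w.r.t. axis `A`: it extends to a total order with no v-valley. -/
def PossSP {C : Type*} (A V : C → C → Prop) : Prop :=
  ∃ T : C → C → Prop, IsStrictTotalOrder C T ∧ Extends V T ∧ ¬ VValley A T

/-!
Row `(i, a)` of `X` has its 1s exactly at the weak upper contour set `{b | ¬ a ≻ᵢ b}`, so the
consecutive ones property says that all these sets are intervals of one axis. For a strict weak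
order this is the same as having no v-valley on that axis. Possible single-peakedness clearly rules
out v-valleys; conversely, a strict weak order without v-valleys is made total by breaking its
ties with the single-peaked order that descends from a top candidate `p` first along the left
side of the axis and then along the right side.
-/

namespace IsSWO

variable {C : Type*} {V : C → C → Prop}

theorem irrefl (hV : IsSWO V) (a : C) : ¬ V a a := fun h => hV.1.1 a a h h

theorem rel_or_rel (hV : IsSWO V) {a c : C} (hac : V a c) (b : C) : V a b ∨ V b c := by
  by_contra! ⟨hab, hbc⟩
  by_cases hba : V b a
  · exact hbc (hV.1.2 _ _ _ hba hac)
  by_cases hcb : V c b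
  · exact hab (hV.1.2 _ _ _ hac hcb)
  exact (hV.2 a b c ⟨hab, hba⟩ ⟨hbc, hcb⟩).1 hac

theorem exists_forall_not_rel [Finite C] [Nonempty C] (hV : IsSWO V) : ∃ p, ∀ z, ¬ V z p := by
  have : IsTrans C V := ⟨hV.1.2⟩
  have : Std.Irrefl V := ⟨hV.irrefl⟩
  obtain ⟨p, -, hp⟩ :=
    (Finite.wellFounded_of_trans_of_irrefl V).has_min Set.univ Set.univ_nonempty
  exact ⟨p, fun z => hp z trivial⟩

theorem not_vValley_iff (hV : IsSWO V) (A : C → C → Prop) :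
    ¬ VValley A V ↔
      ∀ a b1 b2 b3, A b1 b2 → A b2 b3 → ¬ V a b1 → ¬ V a b3 → ¬ V a b2 := by
  constructor
  · intro hnv a b1 b2 b3 h12 h23 hb1 hb3 hb2
    exact hnv ⟨b1, b2, b3, h12, h23, (hV.rel_or_rel hb2 b1).resolve_left hb1,
      (hV.rel_or_rel hb2 b3).resolve_left hb3⟩
  · rintro hconv ⟨c1, c2, c3, h12, h23, h1, h3⟩
    by_cases h13 : V c1 c3
    · exact hconv c3 c1 c2 c3 h12 h23 (hV.1.1 _ _ h13) (hV.irrefl c3) h3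
    · exact hconv c1 c1 c2 c3 h12 h23 (hV.irrefl c1) h13 h1

end IsSWO

theorem PossSP.not_vValley {C : Type*} {A V : C → C → Prop} (h : PossSP A V) :
    ¬ VValley A V := by
  obtain ⟨T, -, hVT, hT⟩ := h
  rintro ⟨c1, c2, c3, h12, h23, h1, h3⟩
  exact hT ⟨c1, c2, c3, h12, h23, hVT _ _ h1, hVT _ _ h3⟩

def tieBreak {C : Type*} (V K : C → C → Prop) (x y : C) : Prop :=
  V x y ∨ (¬ V x y ∧ ¬ V y x ∧ K x y)

theorem IsSWO.isStrictTotalOrder_tieBreak {C : Type*} {V K : C → C → Prop} (hV : IsSWO V)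
    [IsStrictTotalOrder C K] : IsStrictTotalOrder C (tieBreak V K) where
  trichotomous x y hxy hyx := by
    simp only [tieBreak, not_or, not_and] at hxy hyx
    exact Std.Trichotomous.trichotomous x y (hxy.2 hxy.1 hyx.1) (hyx.2 hyx.1 hxy.1)
  irrefl x := by
    rintro (h | ⟨-, -, h⟩)
    exacts [hV.irrefl x h, _root_.irrefl x h]
  trans x y z := by
    rintro (hxy | ⟨nxy, nyx, kxy⟩) (hyz | ⟨nyz, nzy, kyz⟩)
    · exact .inl (hV.1.2 x y z hxy hyz)
    · exact .inl ((hV.rel_or_rel hxy z).resolve_right nzy)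
    · exact .inl ((hV.rel_or_rel hyz x).resolve_left nyx)
    · obtain ⟨nxz, nzx⟩ := hV.2 x y z ⟨nxy, nyx⟩ ⟨nyz, nzy⟩
      exact .inr ⟨nxz, nzx, _root_.trans kxy kyz⟩

section PeakOrder

variable {C : Type*} [LinearOrder C]

/-- `p` first, then the candidates left of `p` in decreasing order, then those right of `p` in
increasing order. -/
def peakOrder (p x y : C) : Prop :=
  (x ≤ p ∧ (y < x ∨ p < y)) ∨ (p < x ∧ x < y)

instance isStrictTotalOrder_peakOrder (p : C) : IsStrictTotalOrder C (peakOrder p) where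
  trichotomous x y hxy hyx := by
    unfold peakOrder at hxy hyx
    grind
  irrefl x := by
    unfold peakOrder
    grind
  trans x y z := by
    unfold peakOrder
    grind

theorem lt_of_peakOrder_of_lt {p x y : C} (h : peakOrder p x y) (hxy : x < y) : p < y := by
  unfold peakOrder at h
  grind

theorem lt_of_peakOrder_of_gt {p x y : C} (h : peakOrder p x y) (hyx : y < x) : y < p := by
  unfold peakOrder at h
  grind

theorem IsSWO.not_vValley_tieBreak_peakOrder {V : C → C → Prop} (hV : IsSWO V)
    (hnv : ¬ VValley (· < ·) V) {p : C} (hp : ∀ z, ¬ V z p) :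
    ¬ VValley (· < ·) (tieBreak V (peakOrder p)) := by
  rintro ⟨c1, c2, c3, h12, h23, hT12, hT32⟩
  have hp_of_rel {c : C} (h : V c c2) : V p c2 := (hV.rel_or_rel h p).resolve_left (hp c)
  -- A tie broken towards `c2` from one side puts `p` on the other side of `c2`, and `p ≻ c2`.
  rcases hT12 with hV12 | ⟨-, -, hK12⟩ <;> rcases hT32 with hV32 | ⟨-, -, hK32⟩
  · exact hnv ⟨c1, c2, c3, h12, h23, hV12, hV32⟩
  · exact hnv ⟨c1, c2, p, h12, lt_of_peakOrder_of_gt hK32 h23, hV12, hp_of_rel hV12⟩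
  · exact hnv ⟨p, c2, c3, lt_of_peakOrder_of_lt hK12 h12, h23, hp_of_rel hV32, hV32⟩
  · exact (lt_of_peakOrder_of_lt hK12 h12).not_gt (lt_of_peakOrder_of_gt hK32 h23)

theorem IsSWO.possSP_of_not_vValley [Finite C] {V : C → C → Prop} (hV : IsSWO V)
    (hnv : ¬ VValley (· < ·) V) : PossSP (· < ·) V := by
  cases isEmpty_or_nonempty C
  · exact ⟨(· < ·), inferInstance, fun x => isEmptyElim x, fun ⟨x, _⟩ => isEmptyElim x⟩
  obtain ⟨p, hp⟩ := hV.exists_forall_not_rel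
  exact ⟨tieBreak V (peakOrder p), hV.isStrictTotalOrder_tieBreak, fun _ _ => .inl,
    hV.not_vValley_tieBreak_peakOrder hnv hp⟩

end PeakOrder

theorem IsStrictTotalOrder.exists_equiv_fin {C : Type*} [Fintype C] {A : C → C → Prop}
    (hA : IsStrictTotalOrder C A) :
    ∃ σ : C ≃ Fin (Fintype.card C), ∀ x y, σ x < σ y ↔ A x y := by
  classical
  let := linearOrderOfSTO A
  exact ⟨(monoEquivOfFin C rfl).symm.toEquiv, fun x y => (monoEquivOfFin C rfl).symm.lt_iff_lt⟩

theorem stmt19 {C : Type*} [Fintype C] (n : ℕ) (V : Fin n → C → C → Prop)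
    (hV : ∀ i, IsSWO (V i)) :
    (∃ A : C → C → Prop, IsStrictTotalOrder C A ∧ ∀ i, PossSP A (V i)) ↔
    (∃ σ : C ≃ Fin (Fintype.card C),
      ∀ i, ∀ a b1 b2 b3 : C, σ b1 < σ b2 → σ b2 < σ b3 →
        ¬ V i a b1 → ¬ V i a b3 → ¬ V i a b2) := by
  constructor
  · rintro ⟨A, hA, hP⟩
    obtain ⟨σ, hσ⟩ := hA.exists_equiv_fin
    refine ⟨σ, fun i a b1 b2 b3 h12 h23 => ?_⟩
    rw [hσ] at h12 h23
    exact ((hV i).not_vValley_iff A).1 (hP i).not_vValley a b1 b2 b3 h12 h23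
  · rintro ⟨σ, hσ⟩
    let : LinearOrder C := LinearOrder.lift' σ σ.injective
    exact ⟨(· < ·), inferInstance, fun i =>
      (hV i).possSP_of_not_vValley (((hV i).not_vValley_iff _).2 (hσ i))⟩
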